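/- arXiv:1203.4020 — 2 statements merged into one kernel-verified Lean document; each statement's English description precedes it below -/
import Mathlib

section
/- Let T > 0, let (X, 𝒳, ν) be a σ-finite measure space, and let ν_T = λ_T ⊗ ν on [0,T] × X, where λ_T is Lebesgue measure on [0,T]. Let h : [0,T] × X → [0,∞) be measurable with ∫ h² dν_T < ∞, and suppose there exists δ₁ ∈ (0,∞) such that ∫_E e^{δ₁·h(s,v)²} ν_T(ds dv) < ∞ for every measurable E ⊆ [0,T] × X with ν_T(E) < ∞. Then for every M ∈ ℕ, lim_{δ → 0} sup_{g ∈ S^M} sup_{0 ≤ s ≤ t ≤ T, t − s ≤ δ} ∫_{[s,t] × X} h(r,v)·|g(r,v) − 1| ν(dv) dr = 0. -/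
open MeasureTheory Set
open scoped ENNReal

/-- `l(r) = r·log r − r + 1` (note `Real.log 0 = 0` in Mathlib, so `ell 0 = 1`). -/
noncomputable def ell (r : ℝ) : ℝ := r * Real.log r - r + 1

/-- `ν_T = λ_T ⊗ ν` on `[0,T] × X`, with `λ_T` Lebesgue measure on `[0,T]`. -/
noncomputable def nuT {X : Type*} [MeasurableSpace X] (T : ℝ) (ν : Measure X) :
    Measure (ℝ × X) := (volume.restrict (Icc 0 T)).prod ν

/-!
For every `η > 0` there is a constant `C` with
`a * |b - 1| ≤ C * a ^ 2 + η * (ell b + (exp (δ₁ * a ^ 2) - 1))` for all `a, b ≥ 0`: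
where `b` is bounded this is AM–GM together with `(b - 1) ^ 2 ≲ ell b`; where `b` is large and
`a` moderate it is `b ≲ ell b / log b`; where both are large it is the Fenchel–Young inequality
`x * b ≤ exp x - 1 + ell b`. Integrate this with `a = h`, `b = g` over the strip `[s, t] × X`.
The `ell g` term contributes at most `η * M`, and `exp (δ₁ * h ^ 2) - 1` is integrable (it is
`O(h ^ 2)` where `h < 1`, and `{h ≥ 1}` has finite measure since `h ∈ L²`). The `h ^ 2` term is
small uniformly over strips of small width, because the time marginal of `h ^ 2 dν_T` is a finite
measure absolutely continuous with respect to Lebesgue measure.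
-/

open Real

lemma sq_sqrt_sub_one_le_ell {b : ℝ} (hb : 0 ≤ b) : (√b - 1) ^ 2 ≤ ell b := by
  rcases hb.eq_or_lt with rfl | hb0
  · simp [ell]
  have hs : 0 < √b := sqrt_pos.2 hb0
  have hlog : 1 - (√b)⁻¹ ≤ log √b := by
    have := log_le_sub_one_of_pos (inv_pos.2 hs)
    rw [log_inv] at this
    linarith
  have hsq : √b ^ 2 = b := sq_sqrt hb
  have hlogb : log b = 2 * log √b := by rw [log_sqrt hb]; ring
  have hb_inv : b * (√b)⁻¹ = √b := by
    rw [mul_inv_eq_iff_eq_mul₀ hs.ne', ← sq, hsq]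
  have := mul_le_mul_of_nonneg_left hlog hb
  rw [ell, hlogb]
  nlinarith

lemma ell_nonneg {b : ℝ} (hb : 0 ≤ b) : 0 ≤ ell b :=
  (sq_nonneg _).trans (sq_sqrt_sub_one_le_ell hb)

lemma sq_sub_one_le_ell {b Λ : ℝ} (hb : 0 ≤ b) (hbΛ : b ≤ Λ) :
    (b - 1) ^ 2 ≤ (√Λ + 1) ^ 2 * ell b := by
  have hsq : (b - 1) ^ 2 = (√b - 1) ^ 2 * (√b + 1) ^ 2 := by
    rw [← mul_pow, mul_comm, ← sq_sub_sq, one_pow, sq_sqrt hb]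
  have hle : (√b + 1) ^ 2 ≤ (√Λ + 1) ^ 2 := by gcongr
  rw [hsq, mul_comm _ (ell b)]
  exact mul_le_mul (sq_sqrt_sub_one_le_ell hb) hle (by positivity) (ell_nonneg hb)

lemma mul_log_sub_one_le_ell {b Λ : ℝ} (hΛ : 0 < Λ) (hΛb : Λ ≤ b) :
    b * (log Λ - 1) ≤ ell b := by
  have := mul_le_mul_of_nonneg_left (log_le_log hΛ hΛb) (hΛ.le.trans hΛb)
  rw [ell]
  linarith

/-- The Fenchel–Young inequality for `ell`, whose convex conjugate is `a ↦ exp a - 1`. -/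
lemma mul_le_exp_sub_one_add_ell (a : ℝ) {b : ℝ} (hb : 0 ≤ b) :
    a * b ≤ exp a - 1 + ell b := by
  rcases hb.eq_or_lt with rfl | hb0
  · simp [ell, (exp_pos a).le]
  have h1 := mul_le_mul_of_nonneg_right (add_one_le_exp (a - log b)) hb
  rw [exp_sub, exp_log hb0, div_mul_cancel₀ _ hb0.ne'] at h1
  rw [ell]
  linarith

lemma mul_abs_sub_one_le_of_le {a b Λ κ : ℝ} (hb : 0 ≤ b) (hbΛ : b ≤ Λ) (hκ : 0 < κ) :
    a * |b - 1| ≤ κ * a ^ 2 + (√Λ + 1) ^ 2 / (4 * κ) * ell b := by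
  have hamgm : a * |b - 1| ≤ κ * a ^ 2 + (b - 1) ^ 2 / (4 * κ) := by
    rw [← sq_abs (b - 1)]
    have := sq_nonneg (2 * κ * a - |b - 1|)
    rw [← sub_nonneg]
    have e : κ * a ^ 2 + |b - 1| ^ 2 / (4 * κ) - a * |b - 1|
        = (2 * κ * a - |b - 1|) ^ 2 / (4 * κ) := by field_simp; ring
    rw [e]; positivity
  calc a * |b - 1| ≤ κ * a ^ 2 + (b - 1) ^ 2 / (4 * κ) := hamgm
    _ ≤ κ * a ^ 2 + (√Λ + 1) ^ 2 * ell b / (4 * κ) := by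
        gcongr; exact sq_sub_one_le_ell hb hbΛ
    _ = κ * a ^ 2 + (√Λ + 1) ^ 2 / (4 * κ) * ell b := by ring

lemma mul_abs_sub_one_le_of_le_of_le {a b β Λ : ℝ} (ha : 0 ≤ a) (haβ : a ≤ β) (hΛ : 1 ≤ Λ)
    (hΛb : Λ ≤ b) (hlogΛ : 1 < log Λ) :
    a * |b - 1| ≤ β / (log Λ - 1) * ell b := by
  have hL : 0 < log Λ - 1 := by linarith
  have hb : 1 ≤ b := hΛ.trans hΛb
  calc a * |b - 1| ≤ β * b := by
        rw [abs_of_nonneg (by linarith)]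
        nlinarith
    _ = β / (log Λ - 1) * (b * (log Λ - 1)) := by field_simp
    _ ≤ β / (log Λ - 1) * ell b := by
        gcongr
        · exact div_nonneg (ha.trans haβ) hL.le
        · exact mul_log_sub_one_le_ell (by linarith) hΛb

lemma mul_abs_sub_one_le_of_mul_le {a b σ δ₁ : ℝ} (ha : 0 ≤ a) (hb : 1 ≤ b) (hσ : 0 < σ)
    (hσa : σ * a ≤ δ₁ * a ^ 2) :
    a * |b - 1| ≤ σ⁻¹ * (exp (δ₁ * a ^ 2) - 1 + ell b) := by
  rw [abs_of_nonneg (by linarith), le_inv_mul_iff₀ hσ]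
  calc σ * (a * (b - 1)) ≤ σ * a * b := by nlinarith
    _ ≤ exp (σ * a) - 1 + ell b := mul_le_exp_sub_one_add_ell _ (by linarith)
    _ ≤ exp (δ₁ * a ^ 2) - 1 + ell b := by gcongr

/-- The regions are `b ≤ Λ`, `a ≤ β < Λ < b` and `β < a, Λ < b`; the thresholds
`β = (η δ₁)⁻¹` and `Λ = exp (1 + β / η)` make the coefficient of `ell b` exactly `η` in the
last two, and `C` is chosen to do the same in the first. -/
lemma exists_mul_abs_sub_one_le {δ₁ η : ℝ} (hδ₁ : 0 < δ₁) (hη : 0 < η) :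
    ∃ C > 0, ∀ a b : ℝ, 0 ≤ a → 0 ≤ b →
      a * |b - 1| ≤ C * a ^ 2 + η * (ell b + (exp (δ₁ * a ^ 2) - 1)) := by
  set β := (η * δ₁)⁻¹
  set Λ := exp (1 + β / η)
  have hβ : 0 < β := by positivity
  have hΛ : 1 ≤ Λ := one_le_exp (by positivity)
  have hlogΛ : log Λ - 1 = β / η := by rw [log_exp]; ring
  refine ⟨(√Λ + 1) ^ 2 / (4 * η), by positivity, fun a b ha hb => ?_⟩
  have hquad : 0 ≤ (√Λ + 1) ^ 2 / (4 * η) * a ^ 2 := by positivity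
  have hexp : 0 ≤ exp (δ₁ * a ^ 2) - 1 := sub_nonneg.2 (one_le_exp (by positivity))
  have hell := ell_nonneg hb
  rcases le_or_gt b Λ with hbΛ | hΛb
  · have := mul_abs_sub_one_le_of_le (a := a) hb hbΛ
      (by positivity : 0 < (√Λ + 1) ^ 2 / (4 * η))
    have hcoef : (√Λ + 1) ^ 2 / (4 * ((√Λ + 1) ^ 2 / (4 * η))) = η := by field_simp
    rw [hcoef] at this
    linarith [mul_nonneg hη.le hexp]
  rcases le_or_gt a β with haβ | hβa
  · have := mul_abs_sub_one_le_of_le_of_le ha haβ hΛ hΛb.le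
      (by linarith [div_pos hβ hη])
    rw [hlogΛ, div_div_cancel₀ hβ.ne'] at this
    linarith [mul_nonneg hη.le hexp]
  · have hσa : η⁻¹ * a ≤ δ₁ * a ^ 2 := by
      have : 1 < η * δ₁ * a := by rwa [← inv_lt_iff_one_lt_mul₀' (by positivity)]
      rw [inv_mul_le_iff₀ hη]
      nlinarith
    have := mul_abs_sub_one_le_of_mul_le ha (hΛ.trans hΛb.le) (inv_pos.2 hη) hσa
    rw [inv_inv] at this
    linarith

lemma exists_pos_forall_measure_Icc_le {ρ : Measure ℝ} [IsFiniteMeasure ρ] (hρ : ρ ≪ volume)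
    {η : ℝ≥0∞} (hη : η ≠ 0) : ∃ δ : ℝ, 0 < δ ∧ ∀ s t : ℝ, t - s ≤ δ → ρ (Icc s t) ≤ η := by
  have hfin : ∫⁻ x, ρ.rnDeriv volume x ≠ ∞ := by
    rw [Measure.lintegral_rnDeriv hρ]
    exact measure_ne_top ρ univ
  obtain ⟨δ₀, hδ₀, hsmall⟩ := exists_pos_setLIntegral_lt_of_measure_lt hfin hη
  obtain ⟨δ, -, hδ, hδδ₀⟩ := ENNReal.lt_iff_exists_real_btwn.1 hδ₀
  refine ⟨δ, ENNReal.ofReal_pos.1 hδ, fun s t hst => ?_⟩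
  rw [← Measure.setLIntegral_rnDeriv hρ]
  refine (hsmall _ ?_).le
  rw [Real.volume_Icc]
  exact (ENNReal.ofReal_le_ofReal hst).trans_lt hδδ₀

lemma exists_pos_forall_setLIntegral_Icc_prod_univ_le {X : Type*} [MeasurableSpace X]
    {μ : Measure (ℝ × X)} (hμ : μ.map Prod.fst ≪ volume) {f : ℝ × X → ℝ≥0∞}
    (hf : ∫⁻ p, f p ∂μ ≠ ∞) {η : ℝ≥0∞} (hη : η ≠ 0) :
    ∃ δ : ℝ, 0 < δ ∧ ∀ s t : ℝ, t - s ≤ δ → ∫⁻ p in Icc s t ×ˢ univ, f p ∂μ ≤ η := by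
  set ρ := (μ.withDensity f).map Prod.fst
  have hρ_apply : ∀ A, MeasurableSet A → ρ A = ∫⁻ p in A ×ˢ univ, f p ∂μ := fun A hA => by
    rw [Measure.map_apply measurable_fst hA, ← prod_univ,
      withDensity_apply _ (hA.prod MeasurableSet.univ)]
  have : IsFiniteMeasure ρ :=
    ⟨by rw [hρ_apply univ .univ, univ_prod_univ, Measure.restrict_univ]; exact hf.lt_top⟩
  obtain ⟨δ, hδ, hsmall⟩ := exists_pos_forall_measure_Icc_le
    (((withDensity_absolutelyContinuous μ f).map measurable_fst).trans hμ) hη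
  exact ⟨δ, hδ, fun s t hst => hρ_apply _ measurableSet_Icc ▸ hsmall s t hst⟩

lemma map_fst_nuT_absolutelyContinuous {X : Type*} [MeasurableSpace X] (T : ℝ) (ν : Measure X)
    [SFinite ν] : (nuT T ν).map Prod.fst ≪ volume := by
  rw [nuT, Measure.map_fst_prod]
  exact Measure.smul_absolutelyContinuous.trans
    (Measure.absolutelyContinuous_of_le Measure.restrict_le_self)

section

variable {α : Type*} [MeasurableSpace α] {μ : Measure α} {h : α → ℝ}

lemma measure_one_le_lt_top (hmeas : Measurable h) (hL2 : ∫⁻ p, ENNReal.ofReal (h p ^ 2) ∂μ < ∞) :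
    μ {p | 1 ≤ h p} < ∞ := by
  refine lt_of_le_of_lt ?_ hL2
  calc μ {p | 1 ≤ h p} ≤ μ {p | 1 ≤ h p ^ 2} :=
        measure_mono fun p (hp : 1 ≤ h p) => show 1 ≤ h p ^ 2 by nlinarith
    _ ≤ ∫⁻ p, ENNReal.ofReal (h p ^ 2) ∂μ := by
        simpa only [one_mul, ENNReal.one_le_ofReal] using
          mul_meas_ge_le_lintegral₀ (hmeas.pow_const 2).ennreal_ofReal.aemeasurable 1

lemma lintegral_exp_mul_sq_sub_one_lt_top (hmeas : Measurable h) (hnonneg : ∀ p, 0 ≤ h p)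
    {δ₁ : ℝ} (hδ₁ : 0 ≤ δ₁) (hL2 : ∫⁻ p, ENNReal.ofReal (h p ^ 2) ∂μ < ∞)
    (hexp : ∫⁻ p in {p | 1 ≤ h p}, ENNReal.ofReal (exp (δ₁ * h p ^ 2)) ∂μ < ∞) :
    ∫⁻ p, ENNReal.ofReal (exp (δ₁ * h p ^ 2) - 1) ∂μ < ∞ := by
  have hE : MeasurableSet {p | 1 ≤ h p} := measurableSet_le measurable_const hmeas
  rw [← lintegral_add_compl _ hE]
  refine ENNReal.add_lt_top.2 ⟨lt_of_le_of_lt (setLIntegral_mono' hE fun p _ =>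
    ENNReal.ofReal_le_ofReal (by linarith)) hexp, ?_⟩
  have hsmall : ∀ p ∈ {p | 1 ≤ h p}ᶜ, ENNReal.ofReal (exp (δ₁ * h p ^ 2) - 1) ≤
      ENNReal.ofReal (δ₁ * exp δ₁) * ENNReal.ofReal (h p ^ 2) := fun p hp => by
    have hx : δ₁ * h p ^ 2 ≤ δ₁ := by
      have : h p ^ 2 ≤ 1 := by nlinarith [hnonneg p, not_le.1 (show ¬1 ≤ h p from hp)]
      nlinarith
    have hexp_sub : exp (δ₁ * h p ^ 2) - 1 ≤ δ₁ * h p ^ 2 * exp (δ₁ * h p ^ 2) := by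
      have := mul_le_mul_of_nonneg_right (add_one_le_exp (-(δ₁ * h p ^ 2)))
        (exp_pos (δ₁ * h p ^ 2)).le
      rw [← exp_add, neg_add_cancel, exp_zero] at this
      linarith
    rw [← ENNReal.ofReal_mul (by positivity)]
    refine ENNReal.ofReal_le_ofReal (hexp_sub.trans ?_)
    calc δ₁ * h p ^ 2 * exp (δ₁ * h p ^ 2) ≤ δ₁ * h p ^ 2 * exp δ₁ := by gcongr
      _ = δ₁ * exp δ₁ * h p ^ 2 := by ring
  calc ∫⁻ p in {p | 1 ≤ h p}ᶜ, ENNReal.ofReal (exp (δ₁ * h p ^ 2) - 1) ∂μ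
      ≤ ∫⁻ p in {p | 1 ≤ h p}ᶜ, ENNReal.ofReal (δ₁ * exp δ₁) * ENNReal.ofReal (h p ^ 2) ∂μ :=
        setLIntegral_mono' hE.compl hsmall
    _ ≤ ENNReal.ofReal (δ₁ * exp δ₁) * ∫⁻ p, ENNReal.ofReal (h p ^ 2) ∂μ := by
        rw [lintegral_const_mul' _ _ ENNReal.ofReal_ne_top]
        exact mul_le_mul_right (setLIntegral_le_lintegral _ _) _
    _ < ∞ := ENNReal.mul_lt_top ENNReal.ofReal_lt_top hL2

lemma setLIntegral_mul_abs_sub_one_le {C η δ₁ : ℝ} (hC : 0 ≤ C) (hη : 0 ≤ η) (hδ₁ : 0 ≤ δ₁)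
    (hpt : ∀ a b : ℝ, 0 ≤ a → 0 ≤ b →
      a * |b - 1| ≤ C * a ^ 2 + η * (ell b + (exp (δ₁ * a ^ 2) - 1)))
    {g : α → ℝ} (hmeas : Measurable h) (hnonneg : ∀ p, 0 ≤ h p)
    (hg0 : ∀ p, 0 ≤ g p) (S : Set α) :
    ∫⁻ p in S, ENNReal.ofReal (h p * |g p - 1|) ∂μ ≤
      ENNReal.ofReal C * ∫⁻ p in S, ENNReal.ofReal (h p ^ 2) ∂μ +
        ENNReal.ofReal η * (∫⁻ p, ENNReal.ofReal (ell (g p)) ∂μ +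
          ∫⁻ p, ENNReal.ofReal (exp (δ₁ * h p ^ 2) - 1) ∂μ) := by
  have hsq : Measurable fun p => ENNReal.ofReal (h p ^ 2) := by fun_prop
  have hexp : Measurable fun p => ENNReal.ofReal (exp (δ₁ * h p ^ 2) - 1) := by fun_prop
  calc ∫⁻ p in S, ENNReal.ofReal (h p * |g p - 1|) ∂μ
      ≤ ∫⁻ p in S, (ENNReal.ofReal C * ENNReal.ofReal (h p ^ 2) + ENNReal.ofReal η *
          (ENNReal.ofReal (ell (g p)) + ENNReal.ofReal (exp (δ₁ * h p ^ 2) - 1))) ∂μ := by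
        refine lintegral_mono fun p => ?_
        have hexp_nonneg : 0 ≤ exp (δ₁ * h p ^ 2) - 1 := sub_nonneg.2 (one_le_exp (by positivity))
        rw [← ENNReal.ofReal_add (ell_nonneg (hg0 p)) hexp_nonneg, ← ENNReal.ofReal_mul hC,
          ← ENNReal.ofReal_mul hη, ← ENNReal.ofReal_add (mul_nonneg hC (sq_nonneg _))
            (mul_nonneg hη (add_nonneg (ell_nonneg (hg0 p)) hexp_nonneg))]
        exact ENNReal.ofReal_le_ofReal (hpt _ _ (hnonneg p) (hg0 p))
    _ = ENNReal.ofReal C * ∫⁻ p in S, ENNReal.ofReal (h p ^ 2) ∂μ +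
          ENNReal.ofReal η * (∫⁻ p in S, ENNReal.ofReal (ell (g p)) ∂μ +
            ∫⁻ p in S, ENNReal.ofReal (exp (δ₁ * h p ^ 2) - 1) ∂μ) := by
        rw [lintegral_add_left (hsq.const_mul _), lintegral_const_mul _ hsq,
          lintegral_const_mul' _ _ ENNReal.ofReal_ne_top, lintegral_add_right _ hexp]
    _ ≤ _ := by
        gcongr <;> exact Measure.restrict_le_self

end

theorem uniform_small_time_integral_control_general
    {X : Type*} [MeasurableSpace X] (T : ℝ)
    (ν : Measure X) [SigmaFinite ν]
    (h : ℝ × X → ℝ) (hmeas : Measurable h) (hnonneg : ∀ p, 0 ≤ h p)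
    (hL2 : ∫⁻ p, ENNReal.ofReal (h p ^ 2) ∂(nuT T ν) < ⊤)
    (hexp : ∃ δ₁ : ℝ, 0 < δ₁ ∧ ∀ E : Set (ℝ × X), MeasurableSet E → nuT T ν E < ⊤ →
      ∫⁻ p in E, ENNReal.ofReal (Real.exp (δ₁ * h p ^ 2)) ∂(nuT T ν) < ⊤)
    (M : ℕ) :
    ∀ ε : ℝ, 0 < ε → ∃ δ : ℝ, 0 < δ ∧
      ∀ g : ℝ × X → ℝ, Measurable g → (∀ p, 0 ≤ g p) →
        (∫⁻ p, ENNReal.ofReal (ell (g p)) ∂(nuT T ν) ≤ (M : ℝ≥0∞)) →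
        ∀ s t : ℝ, 0 ≤ s → s ≤ t → t ≤ T → t - s ≤ δ →
          ∫⁻ p in Icc s t ×ˢ (univ : Set X),
              ENNReal.ofReal (h p * |g p - 1|) ∂(nuT T ν) ≤ ENNReal.ofReal ε := by
  intro ε hε
  obtain ⟨δ₁, hδ₁, hexp⟩ := hexp
  have hK := lintegral_exp_mul_sq_sub_one_lt_top hmeas hnonneg hδ₁.le hL2
    (hexp _ (measurableSet_le measurable_const hmeas) (measure_one_le_lt_top hmeas hL2))
  set K := ∫⁻ p, ENNReal.ofReal (exp (δ₁ * h p ^ 2) - 1) ∂(nuT T ν)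
  have hMK : (M : ℝ≥0∞) + K = ENNReal.ofReal ((M : ℝ≥0∞) + K).toReal :=
    (ENNReal.ofReal_toReal (ENNReal.add_ne_top.2 ⟨ENNReal.natCast_ne_top M, hK.ne⟩)).symm
  obtain ⟨η, hη, hηMK⟩ := exists_pos_mul_lt (half_pos hε) ((M : ℝ≥0∞) + K).toReal
  obtain ⟨C, hC, hpt⟩ := exists_mul_abs_sub_one_le hδ₁ hη
  obtain ⟨δ, hδ, hstrip⟩ := exists_pos_forall_setLIntegral_Icc_prod_univ_le
    (map_fst_nuT_absolutelyContinuous T ν) hL2.ne (η := ENNReal.ofReal (ε / 2 / C))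
    (ENNReal.ofReal_pos.2 (by positivity)).ne'
  refine ⟨δ, hδ, fun g _ hg0 hgM s t _ _ _ hts => ?_⟩
  calc _ ≤ _ := setLIntegral_mul_abs_sub_one_le hC.le hη.le hδ₁.le hpt hmeas hnonneg hg0 _
    _ ≤ ENNReal.ofReal C * ENNReal.ofReal (ε / 2 / C) +
          ENNReal.ofReal η * ENNReal.ofReal ((M : ℝ≥0∞) + K).toReal := by
        rw [← hMK]
        gcongr
        exact hstrip s t hts
    _ = ENNReal.ofReal (ε / 2 + η * ((M : ℝ≥0∞) + K).toReal) := by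
        rw [← ENNReal.ofReal_mul hC.le, ← ENNReal.ofReal_mul hη.le,
          ← ENNReal.ofReal_add (by positivity) (by positivity), mul_div_cancel₀ _ hC.ne']
    _ ≤ ENNReal.ofReal ε := ENNReal.ofReal_le_ofReal (by linarith)

/-- Under square integrability and exponential integrability of `h ≥ 0`
with respect to `ν_T = λ_T ⊗ ν`, for every `M ∈ ℕ`:
`lim_{δ → 0} sup_{g ∈ S^M} sup_{0 ≤ s ≤ t ≤ T, t−s ≤ δ} ∫_{[s,t]×X} h·|g−1| dν_T = 0`
(stated in ε-δ form). -/
theorem uniform_small_time_integral_control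
    {X : Type*} [MeasurableSpace X] (T : ℝ) (hT : 0 < T)
    (ν : Measure X) [SigmaFinite ν]
    (h : ℝ × X → ℝ) (hmeas : Measurable h) (hnonneg : ∀ p, 0 ≤ h p)
    (hL2 : ∫⁻ p, ENNReal.ofReal (h p ^ 2) ∂(nuT T ν) < ⊤)
    (hexp : ∃ δ₁ : ℝ, 0 < δ₁ ∧ ∀ E : Set (ℝ × X), MeasurableSet E → nuT T ν E < ⊤ →
      ∫⁻ p in E, ENNReal.ofReal (Real.exp (δ₁ * h p ^ 2)) ∂(nuT T ν) < ⊤)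
    (M : ℕ) :
    ∀ ε : ℝ, 0 < ε → ∃ δ : ℝ, 0 < δ ∧
      ∀ g : ℝ × X → ℝ, Measurable g → (∀ p, 0 ≤ g p) →
        (∫⁻ p, ENNReal.ofReal (ell (g p)) ∂(nuT T ν) ≤ (M : ℝ≥0∞)) →
        ∀ s t : ℝ, 0 ≤ s → s ≤ t → t ≤ T → t - s ≤ δ →
          ∫⁻ p in Icc s t ×ˢ (univ : Set X),
              ENNReal.ofReal (h p * |g p - 1|) ∂(nuT T ν) ≤ ENNReal.ofReal ε :=
  uniform_small_time_integral_control_general T ν h hmeas hnonneg hL2 hexp M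
end

section
/- Let T > 0, d ∈ ℕ, and let (X, 𝒳, ν) be a σ-finite measure space. Let g : [0,T] × ℝ^d × X → ℝ^d be measurable and suppose: (a) for each s ∈ [0,T] and y ∈ ℝ^d, g(s,y,·) ∈ L²(X, ν; ℝ^d), and for each s the map y ↦ g(s,y,·) (from ℝ^d to L²(X, ν; ℝ^d)) is continuous; (b) there exists κ ∈ (0,∞) with ∫_X ‖g(s,v)‖₀² ν(dv) ≤ κ for all s ∈ [0,T], where ‖g(s,v)‖₀ = sup_{y ∈ ℝ^d} ‖g(s,y,v)‖ / (1 + ‖y‖); (c) there exists δ₀ ∈ (0,∞) such that ∫_E e^{δ₀·‖g(s,v)‖₀} ν(dv) ds < ∞ for every measurable E ⊆ [0,T] × X with (λ_T ⊗ ν)(E) < ∞. Let ψ : [0,T] × X → [0,∞) be measurable with ∫_{[0,T]×X} l(ψ(s,v)) ν(dv) ds < ∞. Then for almost every s ∈ [0,T], the map y ↦ ∫_X (g(s,y,v)/(1 + ‖y‖))·(ψ(s,v) − 1) ν(dv) from ℝ^d to ℝ^d is continuous. -/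
open MeasureTheory Set
open scoped ENNReal

/-!
Fix a time `s` and let `m(v)` be the normalized growth `‖g(s,v)‖₀`, with the supremum taken over a
dense sequence of points `y` so that `m` is measurable; `L²`-continuity in `y` extends the bound
`‖g(s,y,v)‖ ≤ (1 + ‖y‖) m(v)` from the sequence to every `y`, for a.e. `v`.

`ℓ` and `t ↦ eᵗ - 1` are convex conjugates, so `|a - 1| t ≤ ℓ(a) + (eᵗ - 1 - t)` for `a, t ≥ 0`.
With `t = δ₀ m` this gives `|ψ - 1| δ₀ m ≤ ℓ(ψ) + δ₀² m² + 1_{δ₀ m ≥ 1} e^{δ₀ m}`. By Chebyshev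
and (b) the set `{δ₀ m ≥ 1}` has finite `λ_T ⊗ ν`-measure, so by (c), (b), the finite cost of `ψ`
and Fubini the right-hand side is `ν`-integrable for a.e. `s`. Hence `(ψ - 1) m ∈ L¹(ν)`, and also
`min(|ψ - 1|, 1) ∈ L²(ν)` because `min(|a - 1|, 1)² ≤ 4 ℓ(a)`.

For continuity in `y`, split `ψ - 1` at a level `K`: the part below `K` is in `L²`, so by
Cauchy–Schwarz it pairs continuously with `y ↦ g(s,y,·) ∈ L²`; the part above `K` contributes at
most a constant times `∫_{|ψ - 1| > K} |ψ - 1| m dν`, which tends to `0` as `K → ∞`.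
-/

open Filter Topology Real

section Entropy

@[fun_prop]
lemma measurable_ell : Measurable ell := by
  unfold ell
  fun_prop

lemma mul_le_ell_add_exp_sub_one {a : ℝ} (ha : 0 ≤ a) (t : ℝ) : a * t ≤ ell a + (exp t - 1) := by
  rcases ha.eq_or_lt with rfl | ha
  · simp [ell, (exp_pos t).le]
  have h := mul_le_mul_of_nonneg_left (add_one_le_exp (t - log a)) ha.le
  rw [exp_sub, exp_log ha, mul_div_cancel₀ _ ha.ne'] at h
  unfold ell
  linarith

lemma abs_sub_one_mul_le_ell_add {a t : ℝ} (ha : 0 ≤ a) (ht : 0 ≤ t) :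
    |a - 1| * t ≤ ell a + (exp t - 1 - t) := by
  have hplus := mul_le_ell_add_exp_sub_one ha t
  have hminus := mul_le_ell_add_exp_sub_one ha (-t)
  have hsinh : t ≤ sinh t := self_le_sinh_iff.2 ht
  rw [sinh_eq] at hsinh
  rcases abs_cases (a - 1) with ⟨h, -⟩ | ⟨h, -⟩ <;> rw [h] <;> linarith

lemma abs_sub_one_mul_le_ell_add_sq_add {a t : ℝ} (ha : 0 ≤ a) (ht : 0 ≤ t) :
    |a - 1| * t ≤ ell a + (t ^ 2 + (Ici 1).indicator exp t) := by
  refine (abs_sub_one_mul_le_ell_add ha ht).trans (add_le_add le_rfl ?_)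
  by_cases h1 : 1 ≤ t
  · rw [indicator_of_mem (mem_Ici.2 h1)]
    nlinarith
  · rw [indicator_of_notMem (mt mem_Ici.1 h1), add_zero]
    exact (le_abs_self _).trans
      (abs_exp_sub_one_sub_id_le (by rw [abs_of_nonneg ht]; linarith))

lemma min_abs_sub_one_sq_le {a : ℝ} (ha : 0 ≤ a) : min |a - 1| 1 ^ 2 ≤ 4 * ell a := by
  set u := min |a - 1| 1
  have hu₀ : 0 ≤ u := le_min (abs_nonneg _) zero_le_one
  have hu₁ : u ≤ 1 := min_le_right _ _
  have hua : u ≤ |a - 1| := min_le_left _ _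
  -- Take `t = u / 2` above and bound `eᵗ - 1 - t` by `t²`.
  have h := abs_sub_one_mul_le_ell_add ha (by positivity : 0 ≤ u / 2)
  have hexp := abs_exp_sub_one_sub_id_le (x := u / 2)
    (by rw [abs_of_nonneg (by positivity)]; linarith)
  nlinarith [le_abs_self (exp (u / 2) - 1 - u / 2)]

lemma enorm_sub_one_mul_iSup_le {ι : Type*} {a : ℝ} (ha : 0 ≤ a) {t : ι → ℝ}
    (ht : ∀ i, 0 ≤ t i) :
    ‖a - 1‖ₑ * ⨆ i, ENNReal.ofReal (t i) ≤ ENNReal.ofReal (ell a) +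
      ((⨆ i, ENNReal.ofReal (t i)) ^ 2 + ⨆ i, ENNReal.ofReal ((Ici 1).indicator exp (t i))) := by
  rw [ENNReal.mul_iSup]
  refine iSup_le fun i => ?_
  calc ‖a - 1‖ₑ * ENNReal.ofReal (t i) = ENNReal.ofReal (|a - 1| * t i) := by
        rw [Real.enorm_eq_ofReal_abs, ENNReal.ofReal_mul (abs_nonneg _)]
    _ ≤ ENNReal.ofReal (ell a + (t i ^ 2 + (Ici 1).indicator exp (t i))) :=
        ENNReal.ofReal_le_ofReal (abs_sub_one_mul_le_ell_add_sq_add ha (ht i))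
    _ ≤ ENNReal.ofReal (ell a) +
          (ENNReal.ofReal (t i) ^ 2 + ENNReal.ofReal ((Ici 1).indicator exp (t i))) := by
        refine ENNReal.ofReal_add_le.trans (add_le_add le_rfl ?_)
        rw [← ENNReal.ofReal_pow (ht i)]
        exact ENNReal.ofReal_add_le
    _ ≤ _ := by
        gcongr
        · exact le_iSup (fun i => ENNReal.ofReal (t i)) i
        · exact le_iSup (fun i => ENNReal.ofReal ((Ici 1).indicator exp (t i))) i

end Entropy

lemma tendsto_zero_of_forall_eventually_le_add {α : Type*} {l : Filter α} {f : α → ℝ≥0∞}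
    {a : ℕ → α → ℝ≥0∞} {b : ℕ → ℝ≥0∞} (ha : ∀ n, Tendsto (a n) l (𝓝 0))
    (hb : Tendsto b atTop (𝓝 0)) (hf : ∀ n, ∀ᶠ x in l, f x ≤ a n x + b n) :
    Tendsto f l (𝓝 0) := by
  refine ENNReal.tendsto_nhds_zero.2 fun ε hε => ?_
  have hε₂ : 0 < ε / 2 := ENNReal.half_pos hε.ne'
  obtain ⟨n, hn⟩ := (hb.eventually_lt_const hε₂).exists
  filter_upwards [hf n, (ha n).eventually_lt_const hε₂] with x hx han
  calc f x ≤ a n x + b n := hx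
    _ ≤ ε / 2 + ε / 2 := add_le_add han.le hn.le
    _ = ε := ENNReal.add_halves ε

section Integrals

variable {X : Type*} [MeasurableSpace X] {ν : Measure X}

lemma tendsto_lintegral_indicator_lt_atTop {f : X → ℝ≥0∞} (hf : AEMeasurable f ν)
    (hfi : ∫⁻ v, f v ∂ν ≠ ∞) {φ : X → ℝ} (hφ : Measurable φ) :
    Tendsto (fun n : ℕ => ∫⁻ v, {v | (n : ℝ) < φ v}.indicator f v ∂ν) atTop (𝓝 0) := by
  simpa using tendsto_lintegral_of_dominated_convergence' f (f := 0)
    (fun n => hf.indicator (measurableSet_lt measurable_const hφ))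
    (fun n => .of_forall fun v => indicator_le_self _ _ v) hfi
    (.of_forall fun v => tendsto_atTop_of_eventually_const (i₀ := ⌈φ v⌉₊) fun n hn =>
      indicator_of_notMem (show v ∉ {v | (n : ℝ) < φ v} from
        not_lt.2 ((Nat.le_ceil _).trans (Nat.cast_le.2 hn))) f)

lemma ae_lintegral_ne_top_of_lintegral_prod_ne_top {α : Type*} [MeasurableSpace α]
    {μ : Measure α} [SFinite ν] {f : α × X → ℝ≥0∞} (hf : Measurable f)
    (h : ∫⁻ p, f p ∂(μ.prod ν) ≠ ∞) : ∀ᵐ s ∂μ, ∫⁻ v, f (s, v) ∂ν ≠ ∞ := by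
  rw [lintegral_prod _ hf.aemeasurable] at h
  exact (ae_lt_top hf.lintegral_prod_right' h).mono fun _ => ne_of_lt

variable {F : Type*} [NormedAddCommGroup F]

lemma eLpNorm_two_eq_lintegral_sq_rpow (f : X → F) :
    eLpNorm f 2 ν = (∫⁻ v, ‖f v‖ₑ ^ 2 ∂ν) ^ (2⁻¹ : ℝ) := by
  simp [eLpNorm_eq_lintegral_rpow_enorm_toReal two_ne_zero ENNReal.ofNat_ne_top]

lemma memLp_two_of_lintegral_sq_ne_top {f : X → F} (hf : AEStronglyMeasurable f ν)
    (h : ∫⁻ v, ‖f v‖ₑ ^ 2 ∂ν ≠ ∞) : MemLp f 2 ν :=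
  ⟨hf, by
    rw [eLpNorm_two_eq_lintegral_sq_rpow]
    exact ENNReal.rpow_lt_top_of_nonneg (by norm_num) h⟩

lemma tendsto_eLpNorm_two_of_tendsto_lintegral_sq {ι : Type*} {l : Filter ι} {f : ι → X → F}
    (h : Tendsto (fun i => ∫⁻ v, ‖f i v‖ₑ ^ 2 ∂ν) l (𝓝 0)) :
    Tendsto (fun i => eLpNorm (f i) 2 ν) l (𝓝 0) := by
  simp_rw [eLpNorm_two_eq_lintegral_sq_rpow]
  have h0 : (0 : ℝ≥0∞) ^ (2⁻¹ : ℝ) = 0 := ENNReal.zero_rpow_of_pos (by norm_num)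
  exact h0 ▸ (ENNReal.continuous_rpow_const.tendsto 0).comp h

lemma memLp_min_abs_sub_one_of_lintegral_ell_ne_top {χ : X → ℝ} (hχ : Measurable χ)
    (hχ₀ : ∀ v, 0 ≤ χ v) (hcost : ∫⁻ v, ENNReal.ofReal (ell (χ v)) ∂ν ≠ ∞) :
    MemLp (fun v => min |χ v - 1| 1) 2 ν := by
  refine memLp_two_of_lintegral_sq_ne_top (by fun_prop) (ne_top_of_le_ne_top
    (ENNReal.mul_ne_top (by norm_num : (4 : ℝ≥0∞) ≠ ∞) hcost) ?_)
  rw [← lintegral_const_mul' _ _ (by norm_num)]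
  refine lintegral_mono fun v => ?_
  rw [Real.enorm_eq_ofReal_abs, ← ENNReal.ofReal_pow (abs_nonneg _), sq_abs,
    show (4 : ℝ≥0∞) = ENNReal.ofReal 4 by norm_num, ← ENNReal.ofReal_mul (by norm_num)]
  exact ENNReal.ofReal_le_ofReal (min_abs_sub_one_sq_le (hχ₀ v))

variable {Y : Type*} [TopologicalSpace Y]

lemma isClosed_setOf_ae_enorm_le [FirstCountableTopology Y] {G : Y → X → F}
    (hG : ∀ y, AEStronglyMeasurable (G y) ν) {c : Y → ℝ} (hc : Continuous c)
    (hc₀ : ∀ y, 0 < c y) (m : X → ℝ≥0∞)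
    (hcont : ∀ y, Tendsto (fun y' => eLpNorm (G y' - G y) 2 ν) (𝓝 y) (𝓝 0)) :
    IsClosed {y | ∀ᵐ v ∂ν, ‖G y v‖ₑ ≤ ENNReal.ofReal (c y) * m v} := by
  -- Along a subsequence, `L²` convergence becomes a.e. convergence; pass to the limit in the bound.
  refine IsSeqClosed.isClosed fun u y hu hlim => ?_
  obtain ⟨ns, hns, hae⟩ := (tendstoInMeasure_of_tendsto_eLpNorm two_ne_zero (fun k => hG (u k))
    (hG y) ((hcont y).comp hlim)).exists_seq_tendsto_ae
  filter_upwards [hae, ae_all_iff.2 fun k => hu (ns k)] with v hv hbound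
  refine le_of_tendsto_of_tendsto' ((continuous_enorm.tendsto _).comp hv) ?_ hbound
  exact ENNReal.Tendsto.mul_const ((ENNReal.continuous_ofReal.tendsto _).comp
      ((hc.tendsto y).comp (hlim.comp hns.tendsto_atTop)))
    (Or.inl (ENNReal.ofReal_pos.2 (hc₀ y)).ne')

variable [NormedSpace ℝ F]

lemma integrable_smul_of_ae_enorm_le {w : X → ℝ} (hw : AEStronglyMeasurable w ν) {f : X → F}
    (hf : AEStronglyMeasurable f ν) {m : X → ℝ≥0∞} {C : ℝ≥0∞} (hC : C ≠ ∞)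
    (hfm : ∀ᵐ v ∂ν, ‖f v‖ₑ ≤ C * m v) (hwm : ∫⁻ v, ‖w v‖ₑ * m v ∂ν ≠ ∞) :
    Integrable (fun v => w v • f v) ν := by
  refine ⟨hw.smul hf, ?_⟩
  calc ∫⁻ v, ‖w v • f v‖ₑ ∂ν ≤ ∫⁻ v, C * (‖w v‖ₑ * m v) ∂ν := by
        refine lintegral_mono_ae (hfm.mono fun v hv => ?_)
        rw [enorm_smul, mul_left_comm]
        gcongr
    _ = C * ∫⁻ v, ‖w v‖ₑ * m v ∂ν := lintegral_const_mul' C _ hC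
    _ < ∞ := ENNReal.mul_lt_top hC.lt_top hwm.lt_top

lemma memLp_min_abs_of_memLp_min_abs_one {w : X → ℝ} (hw : Measurable w)
    (hw₁ : MemLp (fun v => min |w v| 1) 2 ν) {K : ℝ} (hK : 0 ≤ K) :
    MemLp (fun v => min |w v| K) 2 ν := by
  refine (hw₁.const_mul (K + 1)).of_le (by fun_prop) (.of_forall fun v => ?_)
  rw [Real.norm_of_nonneg (le_min (abs_nonneg _) hK), Real.norm_of_nonneg (by positivity)]
  rcases le_total |w v| 1 with h | h
  · rw [min_eq_left h]
    nlinarith [min_le_left |w v| K, abs_nonneg (w v)]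
  · rw [min_eq_right h]
    linarith [min_le_right |w v| K]

lemma lintegral_enorm_mul_le_of_ae_enorm_le {w : X → ℝ} (hw : Measurable w) {m : X → ℝ≥0∞}
    (hm : AEMeasurable m ν) {h : X → F} (hh : AEStronglyMeasurable h ν) {B : ℝ≥0∞}
    (hhm : ∀ᵐ v ∂ν, ‖h v‖ₑ ≤ B * m v) (K : ℝ) :
    ∫⁻ v, ‖w v‖ₑ * ‖h v‖ₑ ∂ν ≤ eLpNorm (fun v => min |w v| K) 2 ν * eLpNorm h 2 ν +
      B * ∫⁻ v, {v | K < |w v|}.indicator (fun v => ‖w v‖ₑ * m v) v ∂ν := by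
  have htail : AEMeasurable ({v | K < |w v|}.indicator fun v => ‖w v‖ₑ * m v) ν :=
    (hw.enorm.aemeasurable.mul hm).indicator (measurableSet_lt measurable_const hw.abs)
  have hpt : ∀ᵐ v ∂ν, ‖w v‖ₑ * ‖h v‖ₑ ≤ ‖min |w v| K‖ₑ * ‖h v‖ₑ +
      B * {v | K < |w v|}.indicator (fun v => ‖w v‖ₑ * m v) v := by
    filter_upwards [hhm] with v hv
    by_cases hK : |w v| ≤ K
    · rw [min_eq_left hK, Real.enorm_abs]
      exact le_self_add
    · rw [indicator_of_mem (show v ∈ {v | K < |w v|} from not_le.1 hK)]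
      calc ‖w v‖ₑ * ‖h v‖ₑ ≤ ‖w v‖ₑ * (B * m v) := by gcongr
        _ = B * (‖w v‖ₑ * m v) := mul_left_comm _ _ _
        _ ≤ _ := le_add_self
  have hHolder : ∫⁻ v, ‖min |w v| K‖ₑ * ‖h v‖ₑ ∂ν ≤
      eLpNorm (fun v => min |w v| K) 2 ν * eLpNorm h 2 ν := by
    simpa [eLpNorm_one_eq_lintegral_enorm, enorm_smul] using
      eLpNorm_smul_le_mul_eLpNorm (p := 2) (q := 2) (r := 1) hh
        (φ := fun v => min |w v| K) (by fun_prop)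
  calc ∫⁻ v, ‖w v‖ₑ * ‖h v‖ₑ ∂ν ≤ ∫⁻ v, ‖min |w v| K‖ₑ * ‖h v‖ₑ +
        B * {v | K < |w v|}.indicator (fun v => ‖w v‖ₑ * m v) v ∂ν := lintegral_mono_ae hpt
    _ = ∫⁻ v, ‖min |w v| K‖ₑ * ‖h v‖ₑ ∂ν +
        B * ∫⁻ v, {v | K < |w v|}.indicator (fun v => ‖w v‖ₑ * m v) v ∂ν := by
      rw [lintegral_add_right' _ (htail.const_mul B), lintegral_const_mul'' _ htail]
    _ ≤ _ := by gcongr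

theorem continuous_integral_smul {w : X → ℝ} (hw : Measurable w) {m : X → ℝ≥0∞}
    (hm : AEMeasurable m ν) {G : Y → X → F} (hG : ∀ y, AEStronglyMeasurable (G y) ν)
    {c : Y → ℝ} (hc : Continuous c)
    (hdom : ∀ y, ∀ᵐ v ∂ν, ‖G y v‖ₑ ≤ ENNReal.ofReal (c y) * m v)
    (hwm : ∫⁻ v, ‖w v‖ₑ * m v ∂ν ≠ ∞) (hw₁ : MemLp (fun v => min |w v| 1) 2 ν)
    (hcont : ∀ y, Tendsto (fun y' => eLpNorm (G y' - G y) 2 ν) (𝓝 y) (𝓝 0)) :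
    Continuous fun y => ∫ v, w v • G y v ∂ν := by
  have hint : ∀ y, Integrable (fun v => w v • G y v) ν := fun y =>
    integrable_smul_of_ae_enorm_le hw.aestronglyMeasurable (hG y) ENNReal.ofReal_ne_top
      (hdom y) hwm
  refine continuous_iff_continuousAt.2 fun y₀ =>
    tendsto_integral_of_L1 _ (hint y₀).1 (.of_forall hint) ?_
  simp only [← smul_sub, enorm_smul]
  set B := 2 * ENNReal.ofReal (c y₀ + 1)
  have hnear : ∀ᶠ y in 𝓝 y₀, ∀ᵐ v ∂ν, ‖(G y - G y₀) v‖ₑ ≤ B * m v := by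
    filter_upwards [(hc.tendsto y₀).eventually_lt_const (lt_add_one (c y₀))] with y hy
    filter_upwards [hdom y, hdom y₀] with v hv hv₀
    calc ‖(G y - G y₀) v‖ₑ ≤ ‖G y v‖ₑ + ‖G y₀ v‖ₑ := enorm_sub_le
      _ ≤ ENNReal.ofReal (c y) * m v + ENNReal.ofReal (c y₀) * m v := add_le_add hv hv₀
      _ ≤ B * m v := by
        rw [← add_mul, show B = _ + _ from two_mul _]
        gcongr
        linarith
  refine tendsto_zero_of_forall_eventually_le_add
    (a := fun n y => eLpNorm (fun v => min |w v| n) 2 ν * eLpNorm (G y - G y₀) 2 ν)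
    (b := fun n : ℕ => B * ∫⁻ v, {v | (n : ℝ) < |w v|}.indicator (fun v => ‖w v‖ₑ * m v) v ∂ν)
    (fun n => ?_) ?_ (fun n => ?_)
  · simpa using ENNReal.Tendsto.const_mul (hcont y₀)
      (Or.inr (memLp_min_abs_of_memLp_min_abs_one hw hw₁ n.cast_nonneg).eLpNorm_ne_top)
  · simpa using ENNReal.Tendsto.const_mul
      (tendsto_lintegral_indicator_lt_atTop (by fun_prop) hwm hw.abs)
      (Or.inr (by finiteness))
  · filter_upwards [hnear] with y hy
    exact lintegral_enorm_mul_le_of_ae_enorm_le hw hm ((hG y).sub (hG y₀)) hy n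

end Integrals

section SampledGrowth

variable {X : Type*} {E : Type*} [NormedAddCommGroup E] {F : Type*} [NormedAddCommGroup F]

/-- The paper's `‖g(s,v)‖₀ = sup_y ‖g(s,y,v)‖ / (1 + ‖y‖)`, with `y` restricted to the sequence `D`. -/
noncomputable def sampledGrowth (G : E → X → F) (D : ℕ → E) (v : X) : ℝ≥0∞ :=
  ⨆ n, ENNReal.ofReal (‖G (D n) v‖ / (1 + ‖D n‖))

noncomputable def sampledExpTail (δ : ℝ) (G : E → X → F) (D : ℕ → E) (v : X) : ℝ≥0∞ :=
  ⨆ n, ENNReal.ofReal ((Ici 1).indicator exp (δ * (‖G (D n) v‖ / (1 + ‖D n‖))))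

lemma enorm_le_sampledGrowth (G : E → X → F) (D : ℕ → E) (n : ℕ) (v : X) :
    ‖G (D n) v‖ₑ ≤ ENNReal.ofReal (1 + ‖D n‖) * sampledGrowth G D v := by
  have hpos : 0 < 1 + ‖D n‖ := by positivity
  calc ‖G (D n) v‖ₑ
      = ENNReal.ofReal (1 + ‖D n‖) * ENNReal.ofReal (‖G (D n) v‖ / (1 + ‖D n‖)) := by
        rw [← ENNReal.ofReal_mul hpos.le, mul_div_cancel₀ _ hpos.ne', ofReal_norm]
    _ ≤ _ := by
        gcongr
        exact le_iSup (fun n => ENNReal.ofReal (‖G (D n) v‖ / (1 + ‖D n‖))) n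

lemma sampledGrowth_le_iSup (G : E → X → F) (D : ℕ → E) (v : X) :
    sampledGrowth G D v ≤ ⨆ y, ENNReal.ofReal (‖G y v‖ / (1 + ‖y‖)) :=
  iSup_le fun n => le_iSup_of_le (D n) le_rfl

lemma ofReal_mul_sampledGrowth {δ : ℝ} (hδ : 0 ≤ δ) (G : E → X → F) (D : ℕ → E) (v : X) :
    ENNReal.ofReal δ * sampledGrowth G D v =
      ⨆ n, ENNReal.ofReal (δ * (‖G (D n) v‖ / (1 + ‖D n‖))) := by
  simp_rw [sampledGrowth, ENNReal.mul_iSup, ← ENNReal.ofReal_mul hδ]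

lemma sampledExpTail_le_indicator {δ : ℝ} (hδ : 0 ≤ δ) (G : E → X → F) (D : ℕ → E) (v : X) :
    sampledExpTail δ G D v ≤ {v | 1 ≤ ENNReal.ofReal δ * sampledGrowth G D v}.indicator
      (fun v => ⨆ y, ENNReal.ofReal (exp (δ * (‖G y v‖ / (1 + ‖y‖))))) v := by
  refine iSup_le fun n => ?_
  by_cases ht : 1 ≤ δ * (‖G (D n) v‖ / (1 + ‖D n‖))
  · have hv : 1 ≤ ENNReal.ofReal δ * sampledGrowth G D v := by
      rw [ofReal_mul_sampledGrowth hδ]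
      exact le_iSup_of_le n (ENNReal.one_le_ofReal.2 ht)
    rw [indicator_of_mem (mem_Ici.2 ht),
      indicator_of_mem (s := {v | 1 ≤ ENNReal.ofReal δ * sampledGrowth G D v}) hv]
    exact le_iSup_of_le (D n) le_rfl
  · rw [indicator_of_notMem (mt mem_Ici.1 ht), ENNReal.ofReal_zero]
    exact bot_le

lemma enorm_sub_one_mul_sampledGrowth_le {δ a : ℝ} (hδ : 0 ≤ δ) (ha : 0 ≤ a) (G : E → X → F)
    (D : ℕ → E) (v : X) :
    ENNReal.ofReal δ * (‖a - 1‖ₑ * sampledGrowth G D v) ≤ ENNReal.ofReal (ell a) +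
      ((ENNReal.ofReal δ * sampledGrowth G D v) ^ 2 + sampledExpTail δ G D v) := by
  rw [mul_left_comm, ofReal_mul_sampledGrowth hδ]
  exact enorm_sub_one_mul_iSup_le ha fun n => by positivity

variable [MeasurableSpace X] {ν : Measure X}

lemma aemeasurable_sampledGrowth {G : E → X → F} (hG : ∀ y, AEStronglyMeasurable (G y) ν)
    (D : ℕ → E) : AEMeasurable (sampledGrowth G D) ν :=
  AEMeasurable.iSup fun n => ((hG (D n)).norm.aemeasurable.div_const _).ennreal_ofReal

lemma ae_enorm_le_sampledGrowth {G : E → X → F} (hG : ∀ y, AEStronglyMeasurable (G y) ν)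
    (hcont : ∀ y, Tendsto (fun y' => eLpNorm (G y' - G y) 2 ν) (𝓝 y) (𝓝 0)) {D : ℕ → E}
    (hD : DenseRange D) (y : E) :
    ∀ᵐ v ∂ν, ‖G y v‖ₑ ≤ ENNReal.ofReal (1 + ‖y‖) * sampledGrowth G D v := by
  have hclosed := isClosed_setOf_ae_enorm_le hG (c := fun y => 1 + ‖y‖) (by fun_prop)
    (fun y => by positivity) (sampledGrowth G D) hcont
  have hrange :
      range D ⊆ {y | ∀ᵐ v ∂ν, ‖G y v‖ₑ ≤ ENNReal.ofReal (1 + ‖y‖) * sampledGrowth G D v} :=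
    range_subset_iff.2 fun n =>
      (Eventually.of_forall (enorm_le_sampledGrowth G D n) : ∀ᵐ v ∂ν, _)
  exact (hclosed.closure_subset_iff.2 hrange) (hD.closure_eq ▸ mem_univ y)

theorem continuous_integral_div_smul_of_sampledGrowth [NormedSpace ℝ F] {G : E → X → F}
    (hG : ∀ y, AEStronglyMeasurable (G y) ν)
    (hcont : ∀ y, Tendsto (fun y' => eLpNorm (G y' - G y) 2 ν) (𝓝 y) (𝓝 0)) {D : ℕ → E}
    (hD : DenseRange D) {δ : ℝ} (hδ : 0 < δ) (hsq : ∫⁻ v, sampledGrowth G D v ^ 2 ∂ν ≠ ∞)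
    (htail : ∫⁻ v, sampledExpTail δ G D v ∂ν ≠ ∞) {χ : X → ℝ} (hχ : Measurable χ)
    (hχ₀ : ∀ v, 0 ≤ χ v) (hcost : ∫⁻ v, ENNReal.ofReal (ell (χ v)) ∂ν ≠ ∞) :
    Continuous fun y => ∫ v, ((χ v - 1) / (1 + ‖y‖)) • G y v ∂ν := by
  have hm := aemeasurable_sampledGrowth hG D
  have hwm : ∫⁻ v, ‖χ v - 1‖ₑ * sampledGrowth G D v ∂ν ≠ ∞ := by
    refine (ENNReal.lt_top_of_mul_ne_top_right ?_ (ENNReal.ofReal_pos.2 hδ).ne').ne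
    rw [← lintegral_const_mul' _ _ ENNReal.ofReal_ne_top]
    refine ne_top_of_le_ne_top ?_
      (lintegral_mono fun v => enorm_sub_one_mul_sampledGrowth_le hδ.le (hχ₀ v) G D v)
    rw [lintegral_add_left (by fun_prop),
      lintegral_add_left' ((hm.const_mul _).pow_const 2)]
    simp_rw [mul_pow]
    rw [lintegral_const_mul'' _ (hm.pow_const 2)]
    finiteness
  have hcontinuous := continuous_integral_smul (hχ.sub measurable_const) hm hG
    (c := fun y => 1 + ‖y‖) (by fun_prop) (ae_enorm_le_sampledGrowth hG hcont hD) hwm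
    (memLp_min_abs_sub_one_of_lintegral_ell_ne_top hχ hχ₀ hcost) hcont
  have hrw : (fun y => ∫ v, ((χ v - 1) / (1 + ‖y‖)) • G y v ∂ν) =
      fun y => (1 + ‖y‖)⁻¹ • ∫ v, (χ v - 1) • G y v ∂ν := by
    ext y
    rw [← integral_smul]
    simp_rw [smul_smul, div_eq_inv_mul]
  rw [hrw]
  exact ((continuous_const.add continuous_norm).inv₀ fun y =>
    (by positivity : (0 : ℝ) < 1 + ‖y‖).ne').smul hcontinuous

end SampledGrowth

lemma prod_setOf_one_le_const_mul_lt_top {α X : Type*} [MeasurableSpace α] [MeasurableSpace X]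
    {μ : Measure α} [IsFiniteMeasure μ] {ν : Measure X} [SFinite ν] {f : α × X → ℝ≥0∞}
    (hf : Measurable f) {c C : ℝ≥0∞} (hc : c ≠ ∞) (hC : C ≠ ∞)
    (hfC : ∀ᵐ s ∂μ, ∫⁻ v, f (s, v) ^ 2 ∂ν ≤ C) : μ.prod ν {p | 1 ≤ c * f p} < ∞ := by
  have hf₂ : Measurable fun p => (c * f p) ^ 2 := (hf.const_mul c).pow_const 2
  calc μ.prod ν {p | 1 ≤ c * f p} ≤ μ.prod ν {p | 1 ≤ (c * f p) ^ 2} :=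
        measure_mono fun p hp => show 1 ≤ (c * f p) ^ 2 from one_le_pow₀ hp
    _ ≤ ∫⁻ p, (c * f p) ^ 2 ∂(μ.prod ν) := by
        simpa using mul_meas_ge_le_lintegral₀ hf₂.aemeasurable 1
    _ = c ^ 2 * ∫⁻ s, ∫⁻ v, f (s, v) ^ 2 ∂ν ∂μ := by
        simp_rw [mul_pow]
        rw [lintegral_const_mul _ (hf.pow_const 2), lintegral_prod _ (hf.pow_const 2).aemeasurable]
    _ ≤ c ^ 2 * ∫⁻ _, C ∂μ := by gcongr c ^ 2 * ?_; exact lintegral_mono_ae hfC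
    _ < ∞ := by
        rw [lintegral_const]
        finiteness

theorem ae_continuity_of_controlled_drift_general
    (T : ℝ) (d : ℕ)
    {X : Type*} [MeasurableSpace X] (ν : Measure X) [SigmaFinite ν]
    (g : ℝ × EuclideanSpace ℝ (Fin d) × X → EuclideanSpace ℝ (Fin d))
    (hgmeas : Measurable g)
    -- (a) `g(s,y,·) ∈ L²(X,ν;ℝ^d)` and `y ↦ g(s,y,·)` is continuous into `L²`
    (hgcont : ∀ s ∈ Icc (0:ℝ) T, ∀ y : EuclideanSpace ℝ (Fin d),
      Filter.Tendsto (fun y' => ∫⁻ v, ENNReal.ofReal (‖g (s, y', v) - g (s, y, v)‖ ^ 2) ∂ν)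
        (nhds y) (nhds 0))
    -- (b) uniform `L²` bound on `‖g(s,v)‖₀ = sup_y ‖g(s,y,v)‖/(1+‖y‖)`
    (κ : ℝ)
    (hg0 : ∀ s ∈ Icc (0:ℝ) T,
      ∫⁻ v, (⨆ y : EuclideanSpace ℝ (Fin d),
        ENNReal.ofReal (‖g (s, y, v)‖ / (1 + ‖y‖))) ^ 2 ∂ν ≤ ENNReal.ofReal κ)
    -- (c) exponential integrability of `‖g(s,v)‖₀`
    (hexp : ∃ δ₀ : ℝ, 0 < δ₀ ∧ ∀ E : Set (ℝ × X), MeasurableSet E → nuT T ν E < ⊤ →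
      ∫⁻ p in E, ⨆ y : EuclideanSpace ℝ (Fin d),
        ENNReal.ofReal (Real.exp (δ₀ * (‖g (p.1, y, p.2)‖ / (1 + ‖y‖)))) ∂(nuT T ν) < ⊤)
    -- control with finite cost
    (ψ : ℝ × X → ℝ) (hψmeas : Measurable ψ) (hψnonneg : ∀ p, 0 ≤ ψ p)
    (hψcost : ∫⁻ p, ENNReal.ofReal (ell (ψ p)) ∂(nuT T ν) < ⊤) :
    ∀ᵐ s ∂(volume.restrict (Icc (0:ℝ) T)),
      Continuous (fun y : EuclideanSpace ℝ (Fin d) =>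
        ∫ v, ((ψ (s, v) - 1) / (1 + ‖y‖)) • g (s, y, v) ∂ν) := by
  obtain ⟨δ, hδ, hexpδ⟩ := hexp
  obtain ⟨D, hD⟩ := TopologicalSpace.exists_dense_seq (EuclideanSpace ℝ (Fin d))
  set G := fun s y v => g (s, y, v)
  have hM : Measurable fun p : ℝ × X => sampledGrowth (G p.1) D p.2 :=
    Measurable.iSup fun n => by fun_prop
  have hsq : ∀ s ∈ Icc 0 T, ∫⁻ v, sampledGrowth (G s) D v ^ 2 ∂ν ≤ ENNReal.ofReal κ :=
    fun s hs => (lintegral_mono fun v => by gcongr; exact sampledGrowth_le_iSup _ D v).trans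
      (hg0 s hs)
  set S := {p : ℝ × X | 1 ≤ ENNReal.ofReal δ * sampledGrowth (G p.1) D p.2}
  have hSmeas : MeasurableSet S := hM.const_mul _ measurableSet_Ici
  have hS : nuT T ν S < ∞ := prod_setOf_one_le_const_mul_lt_top hM ENNReal.ofReal_ne_top
    ENNReal.ofReal_ne_top (ae_restrict_of_forall_mem measurableSet_Icc hsq)
  have htail : ∀ᵐ s ∂(volume.restrict (Icc 0 T)), ∫⁻ v, sampledExpTail δ (G s) D v ∂ν ≠ ∞ := by
    have hΨ : Measurable fun p : ℝ × X => sampledExpTail δ (G p.1) D p.2 := Measurable.iSup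
      fun n => ((measurable_exp.indicator measurableSet_Ici).comp (by fun_prop)).ennreal_ofReal
    refine ae_lintegral_ne_top_of_lintegral_prod_ne_top hΨ
      (ne_top_of_le_ne_top (hexpδ S hSmeas hS).ne ?_)
    rw [← lintegral_indicator hSmeas]
    exact lintegral_mono fun p => sampledExpTail_le_indicator hδ.le (G p.1) D p.2
  have hcost := ae_lintegral_ne_top_of_lintegral_prod_ne_top (by fun_prop) hψcost.ne
  filter_upwards [htail, hcost, ae_restrict_mem measurableSet_Icc] with s hts hcs hs
  refine continuous_integral_div_smul_of_sampledGrowth (fun y => by fun_prop)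
    (fun y => tendsto_eLpNorm_two_of_tendsto_lintegral_sq ?_) hD hδ
    (ne_top_of_le_ne_top ENNReal.ofReal_ne_top (hsq s hs)) hts (by fun_prop)
    (fun v => hψnonneg _) hcs
  simpa [← ofReal_norm, ENNReal.ofReal_pow] using hgcont s hs y

/-- Under the `L²`-continuity, normalized `L²`-bound and exponential
integrability assumptions on `g`, for a control `ψ` with finite cost, the map
`y ↦ ∫_X (g(s,y,v)/(1+‖y‖))·(ψ(s,v) − 1) ν(dv)` is continuous for a.e. `s ∈ [0,T]`. -/
theorem ae_continuity_of_controlled_drift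
    (T : ℝ) (hT : 0 < T) (d : ℕ)
    {X : Type*} [MeasurableSpace X] (ν : Measure X) [SigmaFinite ν]
    (g : ℝ × EuclideanSpace ℝ (Fin d) × X → EuclideanSpace ℝ (Fin d))
    (hgmeas : Measurable g)
    -- (a) `g(s,y,·) ∈ L²(X,ν;ℝ^d)` and `y ↦ g(s,y,·)` is continuous into `L²`
    (hgL2 : ∀ s ∈ Icc (0:ℝ) T, ∀ y : EuclideanSpace ℝ (Fin d),
      MemLp (fun v => g (s, y, v)) 2 ν)
    (hgcont : ∀ s ∈ Icc (0:ℝ) T, ∀ y : EuclideanSpace ℝ (Fin d),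
      Filter.Tendsto (fun y' => ∫⁻ v, ENNReal.ofReal (‖g (s, y', v) - g (s, y, v)‖ ^ 2) ∂ν)
        (nhds y) (nhds 0))
    -- (b) uniform `L²` bound on `‖g(s,v)‖₀ = sup_y ‖g(s,y,v)‖/(1+‖y‖)`
    (κ : ℝ) (hκ : 0 < κ)
    (hg0 : ∀ s ∈ Icc (0:ℝ) T,
      ∫⁻ v, (⨆ y : EuclideanSpace ℝ (Fin d),
        ENNReal.ofReal (‖g (s, y, v)‖ / (1 + ‖y‖))) ^ 2 ∂ν ≤ ENNReal.ofReal κ)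
    -- (c) exponential integrability of `‖g(s,v)‖₀`
    (hexp : ∃ δ₀ : ℝ, 0 < δ₀ ∧ ∀ E : Set (ℝ × X), MeasurableSet E → nuT T ν E < ⊤ →
      ∫⁻ p in E, ⨆ y : EuclideanSpace ℝ (Fin d),
        ENNReal.ofReal (Real.exp (δ₀ * (‖g (p.1, y, p.2)‖ / (1 + ‖y‖)))) ∂(nuT T ν) < ⊤)
    -- control with finite cost
    (ψ : ℝ × X → ℝ) (hψmeas : Measurable ψ) (hψnonneg : ∀ p, 0 ≤ ψ p)
    (hψcost : ∫⁻ p, ENNReal.ofReal (ell (ψ p)) ∂(nuT T ν) < ⊤) :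
    ∀ᵐ s ∂(volume.restrict (Icc (0:ℝ) T)),
      Continuous (fun y : EuclideanSpace ℝ (Fin d) =>
        ∫ v, ((ψ (s, v) - 1) / (1 + ‖y‖)) • g (s, y, v) ∂ν) :=
  ae_continuity_of_controlled_drift_general T d ν g hgmeas hgcont κ hg0 hexp ψ hψmeas hψnonneg
    hψcost
end
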